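/- Assume 0 < μ < 1/L_f, 0 < β < 2, and ρ > 0. Consider the LCDC-ALM iterates: given x⁰, z⁰ ∈ ℝⁿ and λ⁰ ∈ ℝ^m, for each k ≥ 0 let x^{k+1} be the unique minimizer of x ↦ ⟨∇f(x^k), x − x^k⟩ + ⟨λ^k, Ax − b⟩ + (ρ/2)‖Ax − b‖² + ‖x − z^k‖²/(2μ), let x_{μg}(z^k) be the proximal point of g at z^k, and set z^{k+1} = z^k + β(x^{k+1} − x_{μg}(z^k)) and λ^{k+1} = λ^k + ρ(Ax^{k+1} − b). Then for all k ≥ 0, ψ(x^k, z^k, λ^k) − ψ(x^{k+1}, z^{k+1}, λ^{k+1}) ≥ ((μ^{-1} − L_f)/2)‖x^{k+1} − x^k‖² + (1/μ)(1/β − 1/2)‖z^{k+1} − z^k‖² − (1/ρ)‖λ^{k+1} − λ^k‖². -/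

import Mathlib

open scoped RealInnerProductSpace

noncomputable section

/-- `ℝⁿ` with the Euclidean norm. -/
abbrev En (n : ℕ) := EuclideanSpace ℝ (Fin n)

/-- Real-valued Moreau envelope/proximal map of the convex function `g`. -/
def IsMoreauR {n : ℕ} (g : En n → ℝ) (μ : ℝ) (Mg : En n → ℝ) (xg : En n → En n) : Prop :=
  ∀ z : En n,
    Mg z = g (xg z) + ‖xg z - z‖ ^ 2 / (2 * μ) ∧
    (∀ x, Mg z ≤ g x + ‖x - z‖ ^ 2 / (2 * μ)) ∧
    (∀ x, g x + ‖x - z‖ ^ 2 / (2 * μ) = Mg z → x = xg z)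

/-- The smoothed proximal augmented Lagrangian
`ψ(x,z,λ) = f(x) + ⟨λ, Ax−b⟩ + (ρ/2)‖Ax−b‖² + ‖x−z‖²/(2μ) − M_{μg}(z)`. -/
def psiAL {n m : ℕ} (f : En n → ℝ) (Mg : En n → ℝ) (A : En n →L[ℝ] En m) (b : En m)
    (μ ρ : ℝ) (x z : En n) (lam : En m) : ℝ :=
  f x + ⟪lam, A x - b⟫ + (ρ / 2) * ‖A x - b‖ ^ 2 + ‖x - z‖ ^ 2 / (2 * μ) - Mg z

/-!
The three blocks of the augmented Lagrangian decrease separately. In `x`, the `L`-smooth upper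
bound `f y ≤ f x + ⟪∇f x, y - x⟫ + L/2 ‖y - x‖²` converts the linearized subproblem into a bound
on `f`, and since that subproblem is convex plus `‖· - z‖²/(2μ)`, its minimizer gains an extra
`‖x⁺ - x‖²/(2μ)` (three-point property). In `z`, the Moreau envelope has subgradient
`(z - x_{μg}(z))/μ`, which turns the relaxed step into the `(1/β - 1/2)/μ` term. The dual ascent
costs exactly `ρ‖Ax⁺ - b‖² = ‖λ⁺ - λ‖²/ρ`.
-/
open Set Filter Topology

section Proximal

variable {E F : Type*} [NormedAddCommGroup E] [InnerProductSpace ℝ E]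
  [NormedAddCommGroup F] [InnerProductSpace ℝ F]

theorem upper_bound_of_lipschitz_gradient [CompleteSpace E] {f : E → ℝ} {f' : E → E} {L : ℝ}
    (hf : ∀ x, HasGradientAt f (f' x) x) (hf' : ∀ x y, ‖f' x - f' y‖ ≤ L * ‖x - y‖) (x y : E) :
    f y ≤ f x + ⟪f' x, y - x⟫ + L / 2 * ‖y - x‖ ^ 2 := by
  set v := y - x
  have hline (t : ℝ) : HasDerivAt (fun t : ℝ => f (x + t • v)) ⟪f' (x + t • v), v⟫ t := by
    have hpath : HasDerivAt (fun s : ℝ => x + s • v) v t := by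
      simpa using ((hasDerivAt_id t).smul_const v).const_add x
    have h := (hasGradientAt_iff_hasFDerivAt.1 (hf (x + t • v))).comp_hasDerivAt t hpath
    simp only [InnerProductSpace.toDual_apply_apply] at h
    exact h
  -- `φ' t = ⟪f' (x + t v) - f' x, v⟫ - t L ‖v‖² ≤ 0` by Cauchy–Schwarz and the Lipschitz bound.
  let φ : ℝ → ℝ := fun t => f (x + t • v) - t * ⟪f' x, v⟫ - t ^ 2 * (L / 2 * ‖v‖ ^ 2)
  have hφ (t : ℝ) : HasDerivAt φ (⟪f' (x + t • v) - f' x, v⟫ - t * (L * ‖v‖ ^ 2)) t := by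
    refine (((hline t).sub ((hasDerivAt_id t).mul_const ⟪f' x, v⟫)).sub
      ((hasDerivAt_pow 2 t).mul_const (L / 2 * ‖v‖ ^ 2))).congr_deriv ?_
    simp only [inner_sub_left]
    push_cast
    ring
  have hanti : AntitoneOn φ (Icc 0 1) := by
    refine antitoneOn_of_deriv_nonpos (convex_Icc 0 1)
      (fun t _ => (hφ t).continuousAt.continuousWithinAt)
      (fun t _ => (hφ t).differentiableAt.differentiableWithinAt) fun t ht => ?_
    rw [interior_Icc] at ht
    have hlip : ‖f' (x + t • v) - f' x‖ ≤ L * (t * ‖v‖) := by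
      simpa [norm_smul, abs_of_pos ht.1] using hf' (x + t • v) x
    rw [(hφ t).deriv, sub_nonpos]
    calc ⟪f' (x + t • v) - f' x, v⟫ ≤ ‖f' (x + t • v) - f' x‖ * ‖v‖ := real_inner_le_norm _ _
      _ ≤ L * (t * ‖v‖) * ‖v‖ := by gcongr
      _ = t * (L * ‖v‖ ^ 2) := by ring
  have h01 := hanti (left_mem_Icc.2 zero_le_one) (right_mem_Icc.2 zero_le_one) zero_le_one
  simp only [φ, v, one_smul, one_mul, one_pow, zero_smul, zero_mul, add_zero, sub_zero,
    add_sub_cancel, ne_eq, OfNat.ofNat_ne_zero, not_false_eq_true, zero_pow] at h01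
  linarith

theorem ConvexOn.inner_div_le_of_isMinOn {φ : E → ℝ} (hφ : ConvexOn ℝ univ φ) {μ : ℝ} {z u : E}
    (hu : IsMinOn (fun x => φ x + ‖x - z‖ ^ 2 / (2 * μ)) univ u) (v : E) :
    φ u + ⟪z - u, v - u⟫ / μ ≤ φ v := by
  set a := φ v - φ u - ⟪z - u, v - u⟫ / μ
  set K := ‖v - u‖ ^ 2 / (2 * μ)
  -- Compare `u` with the point `u + t (v - u)` of the segment and divide by `t`.
  have hseg : ∀ t : ℝ, 0 < t → t ≤ 1 → 0 ≤ a + t * K := by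
    intro t ht0 ht1
    have hmin := isMinOn_univ_iff.1 hu (u + t • (v - u))
    have hconv : φ (u + t • (v - u)) ≤ φ u + t * (φ v - φ u) := by
      have := hφ.2 (mem_univ u) (mem_univ v) (sub_nonneg.2 ht1) ht0.le (sub_add_cancel 1 t)
      rw [show (1 - t) • u + t • v = u + t • (v - u) by module, smul_eq_mul, smul_eq_mul] at this
      linarith
    have hnorm : ‖u + t • (v - u) - z‖ ^ 2
        = ‖u - z‖ ^ 2 - 2 * t * ⟪z - u, v - u⟫ + t ^ 2 * ‖v - u‖ ^ 2 := by
      rw [show u + t • (v - u) - z = (u - z) + t • (v - u) by abel, norm_add_sq_real,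
        real_inner_smul_right, norm_smul, mul_pow, Real.norm_eq_abs, sq_abs,
        ← neg_sub z u, inner_neg_left]
      ring
    have hprod : 0 ≤ t * (a + t * K) := by
      rw [hnorm] at hmin
      have : t * (a + t * K) = t * (φ v - φ u) + (‖u - z‖ ^ 2 - 2 * t * ⟪z - u, v - u⟫
          + t ^ 2 * ‖v - u‖ ^ 2) / (2 * μ) - ‖u - z‖ ^ 2 / (2 * μ) := by
        simp only [a, K]; ring
      linarith
    exact nonneg_of_mul_nonneg_right hprod ht0
  have hlim : Tendsto (fun t => a + t * K) (𝓝[>] 0) (𝓝 a) := by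
    have : Tendsto (fun t => a + t * K) (𝓝 0) (𝓝 a) :=
      (continuous_const.add (continuous_id.mul continuous_const)).tendsto' 0 a (by simp [a])
    exact this.mono_left nhdsWithin_le_nhds
  have ha : 0 ≤ a := ge_of_tendsto hlim <| by
    filter_upwards [Ioo_mem_nhdsGT one_pos] with t ht using hseg t ht.1 ht.2.le
  linarith

theorem ConvexOn.add_sq_div_le_of_isMinOn {φ : E → ℝ} (hφ : ConvexOn ℝ univ φ) {μ : ℝ} {z u : E}
    (hu : IsMinOn (fun x => φ x + ‖x - z‖ ^ 2 / (2 * μ)) univ u) (v : E) :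
    φ u + ‖u - z‖ ^ 2 / (2 * μ) + ‖v - u‖ ^ 2 / (2 * μ) ≤ φ v + ‖v - z‖ ^ 2 / (2 * μ) := by
  have h := hφ.inner_div_le_of_isMinOn hu v
  have hnorm : ‖v - z‖ ^ 2 = ‖v - u‖ ^ 2 - 2 * ⟪z - u, v - u⟫ + ‖u - z‖ ^ 2 := by
    rw [show v - z = (v - u) + (u - z) by abel, norm_add_sq_real, ← neg_sub z u, inner_neg_right,
      real_inner_comm]
    ring
  have : (‖v - u‖ ^ 2 - 2 * ⟪z - u, v - u⟫ + ‖u - z‖ ^ 2) / (2 * μ)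
      = ‖u - z‖ ^ 2 / (2 * μ) + ‖v - u‖ ^ 2 / (2 * μ) - ⟪z - u, v - u⟫ / μ := by
    ring
  rw [hnorm]
  linarith

theorem convexOn_linearized_augmentedLagrangian (c x₀ : E) (l : F) (A : E →L[ℝ] F) (b : F)
    {ρ : ℝ} (hρ : 0 ≤ ρ) :
    ConvexOn ℝ univ (fun w => ⟪c, w - x₀⟫ + ⟪l, A w - b⟫ + ρ / 2 * ‖A w - b‖ ^ 2) := by
  have hsq : ConvexOn ℝ univ (fun w => ‖A w - b‖ ^ 2) := by
    have h := ((convexOn_univ_dist b).pow (fun _ _ => dist_nonneg) 2).comp_linearMap A.toLinearMap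
    simp only [dist_eq_norm] at h
    exact h
  have hlin : ConvexOn ℝ univ (fun w => ⟪c, w - x₀⟫ + ⟪l, A w - b⟫) := by
    refine ((((innerSL ℝ c).toLinearMap + (innerSL ℝ l).toLinearMap.comp A.toLinearMap).convexOn
      convex_univ).add_const (-⟪c, x₀⟫ - ⟪l, b⟫)).congr fun w _ => ?_
    simp only [ContinuousLinearMap.toLinearMap_innerSL_apply, Pi.add_apply, LinearMap.add_apply,
      innerₛₗ_apply_apply, LinearMap.coe_comp, coe_innerₛₗ_apply, ContinuousLinearMap.coe_coe,
      Function.comp_apply, inner_sub_right]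
    ring
  exact hlin.add (hsq.smul (by positivity))

end Proximal

namespace IsMoreauR

variable {n : ℕ} {g : En n → ℝ} {μ : ℝ} {Mg : En n → ℝ} {xg : En n → En n}

theorem isMinOn (h : IsMoreauR g μ Mg xg) (z : En n) :
    IsMinOn (fun x => g x + ‖x - z‖ ^ 2 / (2 * μ)) univ (xg z) :=
  isMinOn_univ_iff.2 fun x => (h z).1 ▸ (h z).2.1 x

-- `(z - xg z) / μ` is a subgradient of `Mg` at `z`; after the optimality condition of `xg z`
-- tested at `xg z'`, the remaining defect is `‖(xg z' - z') - (xg z - z)‖² / (2μ) ≥ 0`.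
theorem inner_div_le_sub (h : IsMoreauR g μ Mg xg) (hg : ConvexOn ℝ univ g) (hμ : 0 ≤ μ)
    (z z' : En n) : ⟪z - xg z, z' - z⟫ / μ ≤ Mg z' - Mg z := by
  set u := xg z
  set u' := xg z'
  have hsub := hg.inner_div_le_of_isMinOn (h.isMinOn z) u'
  have hid : 2 * ⟪z - u, u' - u⟫ + ‖u' - z'‖ ^ 2 - ‖u - z‖ ^ 2 - 2 * ⟪z - u, z' - z⟫
      = ‖(u' - z') - (u - z)‖ ^ 2 := by
    rw [show u' - u = (u' - z') - (u - z) + (z' - z) by abel, ← neg_sub u z, inner_neg_left,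
      inner_neg_left, inner_add_right, inner_sub_right, real_inner_self_eq_norm_sq,
      norm_sub_sq_real (u' - z'), real_inner_comm (u - z)]
    ring
  have hdefect : 0 ≤ (2 * ⟪z - u, u' - u⟫ + ‖u' - z'‖ ^ 2 - ‖u - z‖ ^ 2
      - 2 * ⟪z - u, z' - z⟫) / (2 * μ) := by rw [hid]; positivity
  rw [(h z).1, (h z').1]
  have : ⟪z - u, u' - u⟫ / μ + ‖u' - z'‖ ^ 2 / (2 * μ) - ‖u - z‖ ^ 2 / (2 * μ)
      = ⟪z - u, z' - z⟫ / μ + (2 * ⟪z - u, u' - u⟫ + ‖u' - z'‖ ^ 2 - ‖u - z‖ ^ 2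
      - 2 * ⟪z - u, z' - z⟫) / (2 * μ) := by ring
  linarith

theorem relaxed_step_le (h : IsMoreauR g μ Mg xg) (hg : ConvexOn ℝ univ g) (hμ : 0 ≤ μ)
    {β : ℝ} (hβ : β ≠ 0) {x z z' : En n} (hz' : z' = z + β • (x - xg z)) :
    (1 / μ) * (1 / β - 1 / 2) * ‖z' - z‖ ^ 2 + (‖x - z'‖ ^ 2 / (2 * μ) - Mg z')
      ≤ ‖x - z‖ ^ 2 / (2 * μ) - Mg z := by
  set p := x - xg z
  have hM := h.inner_div_le_sub hg hμ z z'
  have hd : z' - z = β • p := by rw [hz']; abel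
  have hx : x - z' = (x - z) - β • p := by rw [hz']; abel
  have hp : ⟪z - xg z, p⟫ = ‖p‖ ^ 2 - ⟪x - z, p⟫ := by
    rw [← real_inner_self_eq_norm_sq, eq_sub_iff_add_eq, ← inner_add_left, sub_add_sub_cancel']
  rw [hd, real_inner_smul_right, hp] at hM
  rw [hd, hx, norm_sub_sq_real, real_inner_smul_right, norm_smul, Real.norm_eq_abs, mul_pow,
    sq_abs]
  have : (1 / μ) * (1 / β - 1 / 2) * (β ^ 2 * ‖p‖ ^ 2)
      + (‖x - z‖ ^ 2 - 2 * (β * ⟪x - z, p⟫) + β ^ 2 * ‖p‖ ^ 2) / (2 * μ)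
      = ‖x - z‖ ^ 2 / (2 * μ) + β * (‖p‖ ^ 2 - ⟪x - z, p⟫) / μ := by
    field_simp
    ring
  linarith

end IsMoreauR

theorem stmt17_general {n m : ℕ} (f : En n → ℝ) (f' : En n → En n) (Lf : ℝ)
    (hfdiff : ∀ x, HasGradientAt f (f' x) x)
    (hfLip : ∀ x y : En n, ‖f' x - f' y‖ ≤ Lf * ‖x - y‖)
    (g : En n → ℝ) (hg : ConvexOn ℝ Set.univ g)
    (A : En n →L[ℝ] En m) (b : En m)
    (μ β ρ : ℝ) (hμ0 : 0 < μ) (hβ0 : 0 < β) (hρ : 0 < ρ)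
    (Mg : En n → ℝ) (xg : En n → En n) (hgprox : IsMoreauR g μ Mg xg)
    (x z : ℕ → En n) (lam : ℕ → En m)
    (hx : ∀ k : ℕ, ∀ w : En n,
      ⟪f' (x k), x (k + 1) - x k⟫ + ⟪lam k, A (x (k + 1)) - b⟫ +
          (ρ / 2) * ‖A (x (k + 1)) - b‖ ^ 2 + ‖x (k + 1) - z k‖ ^ 2 / (2 * μ) ≤
        ⟪f' (x k), w - x k⟫ + ⟪lam k, A w - b⟫ +
          (ρ / 2) * ‖A w - b‖ ^ 2 + ‖w - z k‖ ^ 2 / (2 * μ))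
    (hz : ∀ k : ℕ, z (k + 1) = z k + β • (x (k + 1) - xg (z k)))
    (hlam : ∀ k : ℕ, lam (k + 1) = lam k + ρ • (A (x (k + 1)) - b)) :
    ∀ k : ℕ,
      (μ⁻¹ - Lf) / 2 * ‖x (k + 1) - x k‖ ^ 2 +
          (1 / μ) * (1 / β - 1 / 2) * ‖z (k + 1) - z k‖ ^ 2 -
          (1 / ρ) * ‖lam (k + 1) - lam k‖ ^ 2 ≤
        psiAL f Mg A b μ ρ (x k) (z k) (lam k) -
          psiAL f Mg A b μ ρ (x (k + 1)) (z (k + 1)) (lam (k + 1)) := by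
  intro k
  have hf := upper_bound_of_lipschitz_gradient hfdiff hfLip (x k) (x (k + 1))
  have hxstep := (convexOn_linearized_augmentedLagrangian (f' (x k)) (x k) (lam k) A b
    hρ.le).add_sq_div_le_of_isMinOn (isMinOn_univ_iff.2 (hx k)) (x k)
  have hzstep := hgprox.relaxed_step_le hg hμ0.le hβ0.ne' (hz k)
  set r := A (x (k + 1)) - b
  have hl : lam (k + 1) = lam k + ρ • r := hlam k
  have hdual : ⟪lam (k + 1), r⟫ = ⟪lam k, r⟫ + ρ * ‖r‖ ^ 2 := by
    rw [hl, inner_add_left, real_inner_smul_left, real_inner_self_eq_norm_sq]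
  have hdual_sq : (1 / ρ) * ‖lam (k + 1) - lam k‖ ^ 2 = ρ * ‖r‖ ^ 2 := by
    rw [hl, add_sub_cancel_left, norm_smul, Real.norm_eq_abs, mul_pow, sq_abs]
    field_simp
  have hcoef : (μ⁻¹ - Lf) / 2 * ‖x (k + 1) - x k‖ ^ 2
      = ‖x k - x (k + 1)‖ ^ 2 / (2 * μ) - Lf / 2 * ‖x (k + 1) - x k‖ ^ 2 := by
    rw [norm_sub_rev]
    field_simp
  simp only [sub_self, inner_zero_right, zero_add] at hxstep
  simp only [psiAL]
  linarith

/-- descent property of the smoothed proximal augmented Lagrangian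
along the LCDC-ALM iterates (Algorithm 2). -/
theorem stmt17 {n m : ℕ} (f : En n → ℝ) (f' : En n → En n) (Lf : ℝ) (hLf : 0 < Lf)
    (hfdiff : ∀ x, HasGradientAt f (f' x) x)
    (hfLip : ∀ x y : En n, ‖f' x - f' y‖ ≤ Lf * ‖x - y‖)
    (g : En n → ℝ) (hg : ConvexOn ℝ Set.univ g)
    (A : En n →L[ℝ] En m) (b : En m)
    (μ β ρ : ℝ) (hμ0 : 0 < μ) (hμ1 : μ < 1 / Lf) (hβ0 : 0 < β) (hβ2 : β < 2) (hρ : 0 < ρ)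
    (Mg : En n → ℝ) (xg : En n → En n) (hgprox : IsMoreauR g μ Mg xg)
    (x z : ℕ → En n) (lam : ℕ → En m)
    (hx : ∀ k : ℕ, ∀ w : En n,
      ⟪f' (x k), x (k + 1) - x k⟫ + ⟪lam k, A (x (k + 1)) - b⟫ +
          (ρ / 2) * ‖A (x (k + 1)) - b‖ ^ 2 + ‖x (k + 1) - z k‖ ^ 2 / (2 * μ) ≤
        ⟪f' (x k), w - x k⟫ + ⟪lam k, A w - b⟫ +
          (ρ / 2) * ‖A w - b‖ ^ 2 + ‖w - z k‖ ^ 2 / (2 * μ))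
    (hz : ∀ k : ℕ, z (k + 1) = z k + β • (x (k + 1) - xg (z k)))
    (hlam : ∀ k : ℕ, lam (k + 1) = lam k + ρ • (A (x (k + 1)) - b)) :
    ∀ k : ℕ,
      (μ⁻¹ - Lf) / 2 * ‖x (k + 1) - x k‖ ^ 2 +
          (1 / μ) * (1 / β - 1 / 2) * ‖z (k + 1) - z k‖ ^ 2 -
          (1 / ρ) * ‖lam (k + 1) - lam k‖ ^ 2 ≤
        psiAL f Mg A b μ ρ (x k) (z k) (lam k) -
          psiAL f Mg A b μ ρ (x (k + 1)) (z (k + 1)) (lam (k + 1)) :=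
  stmt17_general f f' Lf hfdiff hfLip g hg A b μ β ρ hμ0 hβ0 hρ Mg xg hgprox x z lam hx hz hlam
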